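/- Let B be an infinite complete ccc Boolean algebra of cardinality at most the continuum 𝔠. Then the following are equivalent: (i) every filter on B having a base of cardinality less than 𝔠 can be extended to a coherent P-ultrafilter on B; (ii) there is no dominating family of functions ℕ → ℕ of cardinality less than 𝔠 (equivalently, 𝔠 = 𝔡). -/

import Mathlib

open Cardinal Filter

variable {B : Type*}

/-- A partition of a Boolean algebra: a set of nonzero, pairwise disjoint
elements that is maximal (every nonzero element meets some member). -/
def IsBPartition [BooleanAlgebra B] (P : Set B) : Prop :=
  ⊥ ∉ P ∧ (P.Pairwise fun a b => a ⊓ b = ⊥) ∧ ∀ b : B, b ≠ ⊥ → ∃ p ∈ P, b ⊓ p ≠ ⊥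

/-- `P` refines `Q`: every member of `P` lies below some member of `Q`. -/
def BRefines [BooleanAlgebra B] (P Q : Set B) : Prop :=
  ∀ p ∈ P, ∃ q ∈ Q, p ≤ q

/-- A filter on a Boolean algebra. -/
def IsBFilter [BooleanAlgebra B] (F : Set B) : Prop :=
  ⊥ ∉ F ∧ ⊤ ∈ F ∧ (∀ a ∈ F, ∀ b : B, a ≤ b → b ∈ F) ∧ ∀ a ∈ F, ∀ b ∈ F, a ⊓ b ∈ F

/-- An ultrafilter on a Boolean algebra. -/
def IsBUltrafilter [BooleanAlgebra B] (U : Set B) : Prop :=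
  IsBFilter U ∧ ∀ b : B, b ∈ U ∨ bᶜ ∈ U

/-- The countable chain condition: every set of pairwise disjoint
nonzero elements is countable. -/
def BCCC (B : Type*) [BooleanAlgebra B] : Prop :=
  ∀ S : Set B, ⊥ ∉ S → (S.Pairwise fun a b => a ⊓ b = ⊥) → S.Countable

/-- A filter on ℕ, presented as a family of subsets of ℕ. -/
def IsNFilter (V : Set (Set ℕ)) : Prop :=
  ∅ ∉ V ∧ Set.univ ∈ V ∧ (∀ A ∈ V, ∀ C : Set ℕ, A ⊆ C → C ∈ V) ∧
    ∀ A ∈ V, ∀ C ∈ V, A ∩ C ∈ V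

/-- An ultrafilter on ℕ, presented as a family of subsets of ℕ. -/
def IsNUltrafilter (V : Set (Set ℕ)) : Prop :=
  IsNFilter V ∧ ∀ A : Set ℕ, A ∈ V ∨ Aᶜ ∈ V

/-- A P-point on ℕ: an ultrafilter such that for every partition of ℕ into
sets not in the ultrafilter there is a member meeting each piece finitely. -/
def IsPPointFamily (V : Set (Set ℕ)) : Prop :=
  IsNUltrafilter V ∧ ∀ A : ℕ → Set ℕ, (Pairwise fun m n => A m ∩ A n = ∅) →
    (⋃ n, A n) = Set.univ → (∀ n, A n ∉ V) → ∃ S ∈ V, ∀ n, (S ∩ A n).Finite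

/-- A selective ultrafilter on ℕ: for every partition of ℕ into sets not in
the ultrafilter there is a member meeting each piece in at most one point. -/
def IsSelectiveFamily (V : Set (Set ℕ)) : Prop :=
  IsNUltrafilter V ∧ ∀ A : ℕ → Set ℕ, (Pairwise fun m n => A m ∩ A n = ∅) →
    (⋃ n, A n) = Set.univ → (∀ n, A n ∉ V) → ∃ S ∈ V, ∀ n, (S ∩ A n).Subsingleton

/-- A coherent P-ultrafilter: an ultrafilter whose trace on every countably
infinite partition is a P-point on ℕ. -/
def IsCoherentPUltrafilter [CompleteBooleanAlgebra B] (U : Set B) : Prop :=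
  IsBUltrafilter U ∧ ∀ p : ℕ → B, Function.Injective p → IsBPartition (Set.range p) →
    IsPPointFamily {A : Set ℕ | (⨆ n ∈ A, p n) ∈ U}

/-- A coherent selective ultrafilter: an ultrafilter whose trace on every
countably infinite partition is a selective ultrafilter on ℕ. -/
def IsCoherentSelectiveUltrafilter [CompleteBooleanAlgebra B] (U : Set B) : Prop :=
  IsBUltrafilter U ∧ ∀ p : ℕ → B, Function.Injective p → IsBPartition (Set.range p) →
    IsSelectiveFamily {A : Set ℕ | (⨆ n ∈ A, p n) ∈ U}

/-- Atomless: every nonzero element properly contains a nonzero element. -/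
def BAtomless (B : Type*) [BooleanAlgebra B] : Prop :=
  ∀ b : B, b ≠ ⊥ → ∃ c : B, c ≠ ⊥ ∧ c < b

/-!
If there is a dominating family `D` of size `< 𝔠`, regard a countably infinite partition of `B`
as indexed by `ℕ × ℕ` and take the filter generated by the joins of the parts lying above the
graphs of finitely many members of `D`. Its trace on `ℕ` cannot lie in a P-point: a set meeting
every column finitely has its column heights bounded by some function, which a member of `D`
eventually dominates, so the set is disjoint from a member of the filter.

If every family of size `< 𝔠` fails to dominate, list the `𝔠` pairs (countable partition of `B`,
partition of `ℕ`) in order type `𝔠` and enlarge a small base of the given filter by one element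
per pair, keeping it centered and of size `< 𝔠`. Either some piece of the partition of `ℕ` is
compatible with the current family, or every piece is avoided by one of its fewer than `𝔠` finite
meets; then a function escaping the fewer than `𝔠` functions they induce yields a set meeting
each piece finitely and compatible with the family. Any ultrafilter containing the result is a
coherent P-ultrafilter.
-/

open Set Function

universe u

def IsDominating (D : Set (ℕ → ℕ)) : Prop :=
  ∀ g : ℕ → ℕ, ∃ f ∈ D, ∀ᶠ n in atTop, g n ≤ f n

theorem mk_finset_le_max (α : Type*) : #(Finset α) ≤ max ℵ₀ #α := by
  classical
  exact (mk_le_of_surjective List.toFinset_surjective).trans (mk_list_le_max α)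

theorem mk_nat_arrow_le_continuum {α : Type*} (h : #α ≤ 𝔠) : #(ℕ → α) ≤ 𝔠 := by
  rw [mk_arrow, mk_nat, lift_aleph0, ← continuum_power_aleph0]
  exact power_le_power_right (lift_le_continuum.2 h)

section Filters
variable [BooleanAlgebra B]

theorem isBFilter_upperClosure {C : Set B} (hne : C.Nonempty) (hbot : ⊥ ∉ C)
    (hdir : DirectedOn (· ≥ ·) C) : IsBFilter (upperClosure C : Set B) := by
  refine ⟨fun ⟨c, hc, hcb⟩ => hbot (le_bot_iff.1 hcb ▸ hc), ?_,
    fun a ha b hab => (upperClosure C).upper hab ha, ?_⟩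
  · obtain ⟨c, hc⟩ := hne
    exact ⟨c, hc, le_top⟩
  · rintro a ⟨c, hc, hca⟩ b ⟨d, hd, hdb⟩
    obtain ⟨e, he, hec, hed⟩ := hdir c hc d hd
    exact ⟨e, he, le_inf (hec.trans hca) (hed.trans hdb)⟩

theorem IsBFilter.exists_isBUltrafilter_superset {F : Set B} (hF : IsBFilter F) :
    ∃ U, IsBUltrafilter U ∧ F ⊆ U := by
  obtain ⟨hbot, htop, hup, hinf⟩ := hF
  -- a filter of `B` is an ideal of `Bᵒᵈ`; maximal ideals of a Boolean algebra are prime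
  let I : Order.Ideal Bᵒᵈ := Order.IsIdeal.toIdeal (I := OrderDual.ofDual ⁻¹' F)
    ⟨fun a b hba ha => hup _ ha _ hba, ⟨OrderDual.toDual ⊤, htop⟩,
      fun a ha b hb => ⟨OrderDual.toDual (OrderDual.ofDual a ⊓ OrderDual.ofDual b),
        hinf _ ha _ hb, inf_le_left, inf_le_right⟩⟩
  have hI : I.IsProper := ⟨fun h => hbot (show (⊤ : Bᵒᵈ) ∈ (I : Set Bᵒᵈ) from h ▸ mem_univ _)⟩
  obtain ⟨J, hIJ, hJ⟩ := hI.exists_le_maximal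
  refine ⟨OrderDual.toDual ⁻¹' J, ⟨⟨hJ.toIsProper.top_notMem, J.bot_mem,
    fun a ha b hab => J.lower hab ha, fun a ha b hb => J.sup_mem ha hb⟩,
    fun b => hJ.isPrime.mem_or_compl_mem⟩, fun a ha => hIJ ha⟩

def finMeets (S : Set B) : Set B :=
  (fun s : Finset B => s.inf id) '' {s | ↑s ⊆ S}

def IsCentered (S : Set B) : Prop :=
  ⊥ ∉ finMeets S

theorem top_mem_finMeets (S : Set B) : ⊤ ∈ finMeets S :=
  ⟨∅, by simp, Finset.inf_empty⟩

theorem subset_finMeets (S : Set B) : S ⊆ finMeets S :=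
  fun x hx => ⟨{x}, by simpa using hx, Finset.inf_singleton⟩

theorem directedOn_finMeets (S : Set B) : DirectedOn (· ≥ ·) (finMeets S) := by
  classical
  rintro _ ⟨s, hs, rfl⟩ _ ⟨t, ht, rfl⟩
  exact ⟨(s ∪ t).inf id, ⟨s ∪ t, by simpa using union_subset hs ht, rfl⟩,
    Finset.inf_mono Finset.subset_union_left, Finset.inf_mono Finset.subset_union_right⟩

theorem mk_finMeets_le (S : Set B) : #(finMeets S) ≤ max ℵ₀ #S := by
  classical
  have hsub : {s : Finset B | ↑s ⊆ S} ⊆ range fun s : Finset S => s.map (Embedding.subtype _) :=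
    fun s hs => ⟨s.subtype (· ∈ S), Finset.subtype_map_of_mem hs⟩
  exact mk_image_le.trans ((mk_le_mk_of_subset hsub).trans
    (mk_range_le.trans (mk_finset_le_max S)))

theorem IsBFilter.finMeets_subset {F S : Set B} (hF : IsBFilter F) (hSF : S ⊆ F) :
    finMeets S ⊆ F := by
  rintro _ ⟨s, hs, rfl⟩
  exact Finset.inf_induction hF.2.1 (fun a ha b hb => hF.2.2.2 a ha b hb) fun b hb => hSF (hs hb)

theorem IsBFilter.isCentered_of_subset {F S : Set B} (hF : IsBFilter F) (hSF : S ⊆ F) :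
    IsCentered S :=
  fun h => hF.1 (hF.finMeets_subset hSF h)

theorem IsCentered.mono {S T : Set B} (hST : S ⊆ T) (hT : IsCentered T) : IsCentered S :=
  fun ⟨s, hs, hbot⟩ => hT ⟨s, hs.trans hST, hbot⟩

theorem isCentered_insert {S : Set B} {b : B} (h : ∀ c ∈ finMeets S, b ⊓ c ≠ ⊥) :
    IsCentered (insert b S) := by
  classical
  rintro ⟨t, ht, hbot⟩
  refine h _ ⟨t.erase b, fun x hx => ?_, rfl⟩ (le_bot_iff.1 ?_)
  · simp only [Finset.coe_erase, Set.mem_sdiff] at hx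
    exact (ht hx.1).resolve_left hx.2
  · calc b ⊓ (t.erase b).inf id = (insert b (t.erase b)).inf id := by simp
      _ ≤ t.inf id := Finset.inf_mono (Finset.insert_erase_subset b t)
      _ = ⊥ := hbot

theorem isCentered_union_iUnion {ι : Type*} {C₀ : Set B} {S : ι → Set B}
    (hdir : Directed (· ⊆ ·) S) (h₀ : IsCentered C₀) (h : ∀ i, IsCentered (C₀ ∪ S i)) :
    IsCentered (C₀ ∪ ⋃ i, S i) := by
  rcases isEmpty_or_nonempty ι with hι | hι
  · simpa using h₀
  rintro ⟨s, hs, hbot⟩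
  rw [union_iUnion] at hs
  have hdir' : Directed (· ⊆ ·) fun i => C₀ ∪ S i :=
    hdir.mono_comp (fun s t : Set B => s ⊆ t) fun _ _ => union_subset_union_right C₀
  obtain ⟨i, hi⟩ := hdir'.exists_mem_subset_of_finset_subset_biUnion hs
  exact h i ⟨s, hi, hbot⟩

theorem IsCentered.exists_isBUltrafilter_superset {S : Set B} (hS : IsCentered S) :
    ∃ U, IsBUltrafilter U ∧ S ⊆ U := by
  obtain ⟨U, hU, hSU⟩ := (isBFilter_upperClosure ⟨⊤, top_mem_finMeets S⟩ hS
    (directedOn_finMeets S)).exists_isBUltrafilter_superset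
  exact ⟨U, hU, fun x hx => hSU ⟨x, subset_finMeets S hx, le_rfl⟩⟩

end Filters

theorem IsBPartition.ne_bot_of_range [BooleanAlgebra B] {ι : Type*} {p : ι → B}
    (hP : IsBPartition (range p)) (i : ι) : p i ≠ ⊥ :=
  fun h => hP.1 (h ▸ mem_range_self i)

theorem IsBPartition.pairwise_disjoint [BooleanAlgebra B] {ι : Type*} {p : ι → B}
    (hP : IsBPartition (range p)) (hp : Injective p) : Pairwise (Disjoint on p) :=
  fun i j hij => disjoint_iff.2 (hP.2.1 (mem_range_self i) (mem_range_self j) (hp.ne hij))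

theorem IsBPartition.sSup_eq_top [CompleteBooleanAlgebra B] {P : Set B} (hP : IsBPartition P) :
    sSup P = ⊤ := by
  by_contra h
  obtain ⟨q, hq, hqP⟩ := hP.2.2 (sSup P)ᶜ fun h' => h (compl_eq_bot.1 h')
  exact hqP (disjoint_iff.1 (disjoint_compl_left.mono_right (le_sSup hq)))

theorem isBPartition_range_of_iSup_eq_top [CompleteBooleanAlgebra B] {ι : Type*} {p : ι → B}
    (hne : ∀ i, p i ≠ ⊥) (hdisj : Pairwise (Disjoint on p)) (htop : ⨆ i, p i = ⊤) :
    IsBPartition (range p) := by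
  refine ⟨fun ⟨i, hi⟩ => hne i hi, ?_, fun b hb => ?_⟩
  · rintro _ ⟨i, rfl⟩ _ ⟨j, rfl⟩ hij
    exact disjoint_iff.1 (hdisj fun h => hij (h ▸ rfl))
  · by_contra! hall
    apply hb
    rw [← inf_top_eq b, ← htop, inf_iSup_eq, iSup_eq_bot]
    exact fun i => hall _ (mem_range_self i)

theorem exists_pairwise_disjoint_ne_bot [BooleanAlgebra B] [Infinite B] :
    ∃ a : ℕ → B, (∀ n, a n ≠ ⊥) ∧ Pairwise (Disjoint on a) := by
  -- split off nonzero pieces from elements with infinitely many elements below them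
  have split : ∀ b : {b : B // (Iic b).Infinite}, ∃ xy : B × {b : B // (Iic b).Infinite},
      xy.1 ≠ ⊥ ∧ xy.1 ≤ b ∧ (xy.2 : B) ≤ b ∧ Disjoint xy.1 xy.2 := by
    rintro ⟨b, hb⟩
    obtain ⟨x, hxb, hx⟩ := (hb.sdiff (toFinite {⊥, b})).nonempty
    simp only [mem_insert_iff, mem_singleton_iff, not_or] at hx
    have hbx : b \ x ≠ ⊥ := fun h => hx.2 (le_antisymm hxb (sdiff_eq_bot_iff.1 h))
    have hcover : Iic b ⊆ (fun yz : B × B => yz.1 ⊔ yz.2) '' (Iic x ×ˢ Iic (b \ x)) :=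
      fun y (hy : y ≤ b) => ⟨(y ⊓ x, y ⊓ (b \ x)), ⟨inf_le_right, inf_le_right⟩,
        show y ⊓ x ⊔ y ⊓ (b \ x) = y by
          rw [← inf_sup_left, sup_sdiff_cancel_right hxb, inf_eq_left.2 hy]⟩
    by_cases hxinf : (Iic x).Infinite
    · exact ⟨(b \ x, ⟨x, hxinf⟩), hbx, sdiff_le, hxb, disjoint_sdiff_self_left⟩
    · have hbxinf : (Iic (b \ x)).Infinite := fun hfin =>
        hb (((not_infinite.1 hxinf).prod hfin).image _ |>.subset hcover)
      exact ⟨(x, ⟨b \ x, hbxinf⟩), hx.1, hxb, sdiff_le, disjoint_sdiff_self_right⟩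
  choose f hf using split
  let c : ℕ → {b : B // (Iic b).Infinite} :=
    fun n => (fun b => (f b).2)^[n] ⟨⊤, by simpa [Iic_top] using infinite_univ⟩
  have hc : ∀ n, c (n + 1) = (f (c n)).2 := fun n => iterate_succ_apply' _ n _
  have hanti : Antitone fun n => (c n : B) :=
    antitone_nat_of_succ_le fun n => by rw [hc]; exact (hf (c n)).2.2.1
  refine ⟨fun n => (f (c n)).1, fun n => (hf (c n)).1, (pairwise_disjoint_on _).2 fun m n hmn => ?_⟩
  refine (hf (c m)).2.2.2.mono_right ((hf (c n)).2.1.trans ?_)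
  rw [← hc]
  exact hanti hmn

theorem exists_injective_isBPartition_range [CompleteBooleanAlgebra B] [Infinite B] :
    ∃ p : ℕ → B, Injective p ∧ IsBPartition (range p) := by
  obtain ⟨a, hne, hdisj⟩ := exists_pairwise_disjoint_ne_bot (B := B)
  set r := (⨆ m, a m)ᶜ
  have hra : ∀ n, Disjoint r (a n) := fun n => disjoint_compl_left.mono_right (le_iSup a n)
  -- enlarge the first piece by the part of `B` that no piece meets
  let p : ℕ → B := fun n => if n = 0 then a 0 ⊔ r else a n
  have hap : ∀ n, a n ≤ p n := fun n => by by_cases hn : n = 0 <;> simp [p, hn]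
  have hpa : ∀ n, p n ≤ a n ⊔ r := fun n => by by_cases hn : n = 0 <;> simp [p, hn]
  have hrp : r ≤ p 0 := by simp [p]
  have hpne : ∀ n, p n ≠ ⊥ := fun n => ne_bot_of_le_ne_bot (hne n) (hap n)
  have hpdisj : Pairwise (Disjoint on p) := by
    have key : ∀ m n, m ≠ n → n ≠ 0 → Disjoint (p m) (p n) := fun m n hmn hn =>
      ((hdisj hmn).sup_left (hra n)).mono (hpa m) (by simp [p, hn])
    intro m n hmn
    rcases eq_or_ne n 0 with rfl | hn
    · exact (key 0 m hmn.symm hmn).symm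
    · exact key m n hmn hn
  refine ⟨p, fun m n h => by_contra fun hmn => by
    have hd : Disjoint (p m) (p n) := hpdisj hmn
    rw [h, disjoint_self] at hd
    exact hpne n hd,
    isBPartition_range_of_iSup_eq_top hpne hpdisj (eq_top_iff.2 ?_)⟩
  calc ⊤ = (⨆ m, a m) ⊔ r := sup_compl_eq_top.symm
    _ ≤ ⨆ n, p n := sup_le (iSup_mono hap) (hrp.trans (le_iSup p 0))

theorem isNUltrafilter_trace [CompleteBooleanAlgebra B] {U : Set B} (hU : IsBUltrafilter U)
    {p : ℕ → B} (hp : Injective p) (hP : IsBPartition (range p)) :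
    IsNUltrafilter {A | (⨆ n ∈ A, p n) ∈ U} := by
  obtain ⟨⟨hbot, htop, hup, hinf⟩, hult⟩ := hU
  have huniv : (⨆ n ∈ (Set.univ : Set ℕ), p n) = ⊤ := by
    rw [iSup_univ, ← sSup_range, hP.sSup_eq_top]
  refine ⟨⟨by simpa using hbot, show (⨆ n ∈ (Set.univ : Set ℕ), p n) ∈ U from huniv ▸ htop,
    fun A hA C hAC => hup _ hA _ (biSup_mono hAC), fun A hA C hC => ?_⟩, fun A => ?_⟩
  · rw [mem_ofPred_eq, biSup_inter_of_pairwise_disjoint (hP.pairwise_disjoint hp)]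
    exact hinf _ hA _ hC
  · refine (hult _).imp_right fun h => hup _ h _ (codisjoint_iff_compl_le_left.1 ?_)
    rw [codisjoint_iff, ← iSup_union, compl_union_self, huniv]

theorem exists_eq_preimage_singleton {A : ℕ → Set ℕ} (hdisj : Pairwise fun m n => A m ∩ A n = ∅)
    (hcov : ⋃ n, A n = Set.univ) : ∃ h : ℕ → ℕ, A = fun n => h ⁻¹' {n} := by
  choose h hh using fun k => mem_iUnion.1 (hcov ▸ mem_univ k)
  refine ⟨h, funext fun n => ext fun k => ⟨fun hk => by_contra fun hkn => ?_, fun hk => ?_⟩⟩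
  · exact (hdisj hkn).subset ⟨hh k, hk⟩
  · exact (mem_singleton_iff.1 hk) ▸ hh k

/-- The points of `ℕ ≅ ℕ × ℕ` (via `Nat.unpair`) strictly above the graph of `f` on the columns
from `N` on. -/
def aboveGraph (f : ℕ → ℕ) (N : ℕ) : Set ℕ :=
  {k | N ≤ k.unpair.1 ∧ f k.unpair.1 < k.unpair.2}

theorem aboveGraph_nonempty (f : ℕ → ℕ) (N : ℕ) : (aboveGraph f N).Nonempty :=
  ⟨Nat.pair N (f N + 1), by simp [aboveGraph]⟩

theorem aboveGraph_anti {f g : ℕ → ℕ} {M N : ℕ} (hfg : f ≤ g) (hMN : M ≤ N) :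
    aboveGraph g N ⊆ aboveGraph f M :=
  fun _ ⟨hN, hg⟩ => ⟨hMN.trans hN, (hfg _).trans_lt hg⟩

theorem not_isPPointFamily_of_isDominating {D : Set (ℕ → ℕ)} (hD : IsDominating D)
    {V : Set (Set ℕ)} (hV : ∀ f ∈ D, ∀ N, aboveGraph f N ∈ V) : ¬IsPPointFamily V := by
  rintro ⟨⟨⟨hempty, -, -, hinter⟩, -⟩, hpp⟩
  have hmeet : ∀ A ∈ V, ∀ C ∈ V, A ∩ C ≠ ∅ := fun A hA C hC h => hempty (h ▸ hinter A hA C hC)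
  let col : ℕ → Set ℕ := fun n => {k | k.unpair.1 = n}
  obtain ⟨f₀, hf₀, -⟩ := hD 0
  have hcol : ∀ n, col n ∉ V := fun n hn => hmeet _ hn _ (hV f₀ hf₀ (n + 1))
    (eq_empty_of_forall_notMem fun k ⟨(hk : k.unpair.1 = n), (hk' : n + 1 ≤ k.unpair.1), _⟩ => by
      omega)
  obtain ⟨S, hSV, hS⟩ := hpp col
    (fun m n hmn => eq_empty_of_forall_notMem fun k ⟨hm, hn⟩ => hmn (hm.symm.trans hn))
    (iUnion_eq_univ_iff.2 fun k => ⟨_, rfl⟩) hcol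
  choose g hg using fun n => ((hS n).image fun k => k.unpair.2).bddAbove
  obtain ⟨f, hfD, hf⟩ := hD g
  obtain ⟨N, hN⟩ := eventually_atTop.1 hf
  refine hmeet _ hSV _ (hV f hfD N) (eq_empty_of_forall_notMem fun k ⟨hkS, hkN, hkf⟩ => ?_)
  have hkg : k.unpair.2 ≤ g k.unpair.1 := hg _ ⟨k, ⟨hkS, rfl⟩, rfl⟩
  have hgf := hN _ hkN
  omega

theorem exists_small_isBFilter_not_subset_coherentP [CompleteBooleanAlgebra B] [Infinite B]
    {D : Set (ℕ → ℕ)} (hDc : #D < 𝔠) (hD : IsDominating D) :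
    ∃ F : Set B, IsBFilter F ∧ (∃ C ⊆ F, #C < 𝔠 ∧ ∀ a ∈ F, ∃ c ∈ C, c ≤ a) ∧
      ∀ U, IsCoherentPUltrafilter U → ¬F ⊆ U := by
  classical
  obtain ⟨p, hp, hP⟩ := exists_injective_isBPartition_range (B := B)
  let c : Finset D × ℕ → B := fun sN => ⨆ k ∈ aboveGraph (sN.1.sup (↑)) sN.2, p k
  have hc : ∀ {s t : Finset D} {M N}, s ⊆ t → M ≤ N → c (t, N) ≤ c (s, M) := fun hst hMN =>
    biSup_mono (aboveGraph_anti (Finset.sup_mono hst) hMN)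
  refine ⟨upperClosure (range c), isBFilter_upperClosure (range_nonempty c) ?_ ?_,
    ⟨range c, subset_upperClosure, ?_, fun a ha => mem_upperClosure.1 ha⟩, fun U hU hFU => ?_⟩
  · rintro ⟨⟨s, N⟩, hsN⟩
    obtain ⟨k, hk⟩ := aboveGraph_nonempty (s.sup (↑)) N
    exact hP.ne_bot_of_range k (le_bot_iff.1 (hsN ▸ le_biSup p hk))
  · rintro _ ⟨⟨s, M⟩, rfl⟩ _ ⟨⟨t, N⟩, rfl⟩
    exact ⟨c (s ∪ t, max M N), mem_range_self _, hc Finset.subset_union_left (le_max_left M N),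
      hc Finset.subset_union_right (le_max_right M N)⟩
  · refine lift_lt_continuum.1 (mk_range_le_lift.trans_lt (lift_lt_continuum.2 ?_))
    rw [mk_prod, lift_id, lift_id, mk_nat]
    exact mul_lt_of_lt aleph0_le_continuum
      ((mk_finset_le_max D).trans_lt (max_lt aleph0_lt_continuum hDc)) aleph0_lt_continuum
  · refine not_isPPointFamily_of_isDominating hD (fun f hf N => ?_) (hU.2 p hp hP)
    simpa [c] using hFU (subset_upperClosure (mem_range_self (({⟨f, hf⟩} : Finset D), N)))

theorem exists_finite_inter_fibers_of_not_isDominating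
    (hnd : ∀ D : Set (ℕ → ℕ), #D < 𝔠 → ¬IsDominating D) (h : ℕ → ℕ) {𝒯 : Set (Set ℕ)}
    (h𝒯 : #𝒯 < 𝔠) (hdir : DirectedOn (· ⊇ ·) 𝒯) (hne : ∀ t ∈ 𝒯, t.Nonempty)
    (havoid : ∀ n, ∃ t ∈ 𝒯, ∀ k ∈ t, h k ≠ n) :
    ∃ A : Set ℕ, (∀ n, (A ∩ h ⁻¹' {n}).Finite) ∧ ∀ t ∈ 𝒯, (A ∩ t).Nonempty := by
  have above : ∀ m, ∃ t ∈ 𝒯, ∀ k ∈ t, m < h k := by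
    intro m
    induction m with
    | zero =>
      obtain ⟨t, ht, hth⟩ := havoid 0
      exact ⟨t, ht, fun k hk => Nat.pos_of_ne_zero (hth k hk)⟩
    | succ m ih =>
      obtain ⟨t, ht, hth⟩ := ih
      obtain ⟨t', ht', ht'h⟩ := havoid (m + 1)
      obtain ⟨r, hr, hrt, hrt'⟩ := hdir t ht t' ht'
      exact ⟨r, hr, fun k hk => lt_of_le_of_ne (hth k (hrt hk)) (ht'h k (hrt' hk)).symm⟩
  have high : ∀ t : 𝒯, ∀ m, ∃ k ∈ (t : Set ℕ), m < h k := by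
    rintro ⟨t, ht⟩ m
    obtain ⟨t', ht', ht'h⟩ := above m
    obtain ⟨r, hr, hrt, hrt'⟩ := hdir t ht t' ht'
    obtain ⟨k, hk⟩ := hne r hr
    exact ⟨k, hrt hk, ht'h k (hrt' hk)⟩
  choose f hf using high
  obtain ⟨g, hg⟩ : ∃ g : ℕ → ℕ, ∀ t, ¬∀ᶠ m in atTop, g m ≤ f t m := by
    simpa [IsDominating] using hnd (range f) (mk_range_le.trans_lt h𝒯)
  -- `A` meets the fiber over `n` below `max_{m<n} g m`, and contains `f t m` whenever `f t m < g m`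
  refine ⟨{k | ∃ m < h k, k ≤ g m}, fun n => ?_, fun t ht => ?_⟩
  · refine ((finite_Iio n).biUnion fun m _ => finite_Iic (g m)).subset ?_
    rintro k ⟨⟨m, hm, hk⟩, rfl : h k = n⟩
    exact mem_biUnion hm hk
  · obtain ⟨m, hm⟩ := (not_eventually.1 (hg ⟨t, ht⟩)).exists
    exact ⟨f ⟨t, ht⟩ m, ⟨m, (hf ⟨t, ht⟩ m).2, (not_le.1 hm).le⟩, (hf ⟨t, ht⟩ m).1⟩

theorem exists_finite_inter_fibers_biSup_inf_ne_bot [CompleteBooleanAlgebra B]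
    (hnd : ∀ D : Set (ℕ → ℕ), #D < 𝔠 → ¬IsDominating D) {p : ℕ → B}
    (hP : IsBPartition (range p)) (h : ℕ → ℕ) {M : Set B} (hM : #M < 𝔠)
    (hdir : DirectedOn (· ≥ ·) M) (hbot : ⊥ ∉ M)
    (havoid : ∀ n, ∃ c ∈ M, (⨆ k ∈ h ⁻¹' {n}, p k) ⊓ c = ⊥) :
    ∃ A : Set ℕ, (∀ n, (A ∩ h ⁻¹' {n}).Finite) ∧ ∀ c ∈ M, (⨆ k ∈ A, p k) ⊓ c ≠ ⊥ := by
  let T : B → Set ℕ := fun c => {k | p k ⊓ c ≠ ⊥}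
  have hT : ∀ A c, (⨆ k ∈ A, p k) ⊓ c = ⊥ ↔ Disjoint A (T c) := fun A c => by
    rw [iSup₂_inf_eq, iSup₂_eq_bot]
    simp [T, Set.disjoint_left]
  have hTdir : DirectedOn (· ⊇ ·) (T '' M) := by
    rintro _ ⟨c, hc, rfl⟩ _ ⟨d, hd, rfl⟩
    obtain ⟨e, he, hce, hde⟩ := hdir c hc d hd
    exact ⟨T e, mem_image_of_mem T he, fun k hk => ne_bot_of_le_ne_bot hk (inf_le_inf_left _ hce),
      fun k hk => ne_bot_of_le_ne_bot hk (inf_le_inf_left _ hde)⟩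
  have hTne : ∀ t ∈ T '' M, t.Nonempty := by
    rintro _ ⟨c, hc, rfl⟩
    obtain ⟨_, ⟨k, rfl⟩, hk⟩ := hP.2.2 c (ne_of_mem_of_not_mem hc hbot)
    exact ⟨k, by rwa [inf_comm] at hk⟩
  have hTavoid : ∀ n, ∃ t ∈ T '' M, ∀ k ∈ t, h k ≠ n := fun n => by
    obtain ⟨c, hc, hnc⟩ := havoid n
    exact ⟨T c, mem_image_of_mem T hc, fun k hk hkn => Set.disjoint_left.1 ((hT _ c).1 hnc) hkn hk⟩
  obtain ⟨A, hA, hAT⟩ := exists_finite_inter_fibers_of_not_isDominating hnd h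
    (lift_lt_continuum.1 (mk_image_le_lift.trans_lt (lift_lt_continuum.2 hM))) hTdir hTne hTavoid
  refine ⟨A, hA, fun c hc hAc => ?_⟩
  obtain ⟨k, hkA, hkT⟩ := hAT _ (mem_image_of_mem T hc)
  exact Set.disjoint_left.1 ((hT A c).1 hAc) hkA hkT

theorem IsCentered.exists_insert_fiber_or_finite_inter_fibers [CompleteBooleanAlgebra B]
    (hnd : ∀ D : Set (ℕ → ℕ), #D < 𝔠 → ¬IsDominating D) {p : ℕ → B}
    (hP : IsBPartition (range p)) (h : ℕ → ℕ) {S : Set B} (hS : IsCentered S) (hSc : #S < 𝔠) :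
    ∃ b, IsCentered (insert b S) ∧ ((∃ n, b = ⨆ k ∈ h ⁻¹' {n}, p k) ∨
      ∃ A : Set ℕ, b = (⨆ k ∈ A, p k) ∧ ∀ n, (A ∩ h ⁻¹' {n}).Finite) := by
  by_cases hfib : ∃ n, ∀ c ∈ finMeets S, (⨆ k ∈ h ⁻¹' {n}, p k) ⊓ c ≠ ⊥
  · obtain ⟨n, hn⟩ := hfib
    exact ⟨_, isCentered_insert hn, Or.inl ⟨n, rfl⟩⟩
  · push Not at hfib
    obtain ⟨A, hA, hAS⟩ := exists_finite_inter_fibers_biSup_inf_ne_bot hnd hP h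
      ((mk_finMeets_le S).trans_lt (max_lt aleph0_lt_continuum hSc)) (directedOn_finMeets S) hS hfib
    exact ⟨_, isCentered_insert hAS, Or.inr ⟨A, rfl, hA⟩⟩

theorem exists_isCentered_forall_of_extend {α T : Type u} [BooleanAlgebra α] {κ : Cardinal.{u}}
    (hκ : ℵ₀ ≤ κ) (hT : #T ≤ κ) (R : T → α → Prop) {C₀ : Set α} (hC₀ : IsCentered C₀)
    (hC₀κ : #C₀ < κ)
    (hext : ∀ t S, IsCentered S → #S < κ → ∃ b, IsCentered (insert b S) ∧ R t b) :
    ∃ S, C₀ ⊆ S ∧ IsCentered S ∧ ∀ t, ∃ b ∈ S, R t b := by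
  rcases isEmpty_or_nonempty T with hTe | hTne
  · exact ⟨C₀, subset_rfl, hC₀, isEmptyElim⟩
  choose! ext hext using hext
  -- enumerate `T` along the initial well-order of `κ`, each stage having fewer than `κ` elements
  obtain ⟨e⟩ : Nonempty (T ↪ κ.ord.ToType) := by rwa [← Cardinal.le_def, mk_ord_toType]
  have hIio_lt : ∀ i : κ.ord.ToType, #(Iio i) < κ := fun i =>
    (mk_Iio_lt i (by simp)).trans_eq (mk_ord_toType κ)
  let b : κ.ord.ToType → α := wellFounded_lt.fix fun i rec =>
    ext (invFun e i) (C₀ ∪ range fun j : Iio i => rec j j.2)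
  have hb : ∀ i, b i = ext (invFun e i) (C₀ ∪ b '' Iio i) := fun i => by
    rw [image_eq_range]
    exact wellFounded_lt.fix_eq _ i
  have hsmall : ∀ i, #(C₀ ∪ b '' Iio i : Set α) < κ := fun i =>
    (mk_union_le _ _).trans_lt (add_lt_of_lt hκ hC₀κ (mk_image_le.trans_lt (hIio_lt i)))
  have hmono : Monotone fun i => b '' Iic i := fun j k hjk => image_mono (Iic_subset_Iic.2 hjk)
  have hIio : ∀ i, (∀ j < i, IsCentered (C₀ ∪ b '' Iic j)) → IsCentered (C₀ ∪ b '' Iio i) := by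
    intro i hi
    refine (isCentered_union_iUnion (S := fun j : Iio i => b '' Iic j)
      (hmono.comp (Subtype.mono_coe _)).directed_le hC₀ fun j => hi j j.2).mono
      (union_subset_union_right C₀ ?_)
    rintro _ ⟨j, hj, rfl⟩
    exact mem_iUnion.2 ⟨⟨j, hj⟩, mem_image_of_mem b self_mem_Iic⟩
  have hIic : ∀ i, IsCentered (C₀ ∪ b '' Iic i) := fun i => by
    induction i using WellFoundedLT.induction with
    | _ i ih =>
      rw [← Iio_insert, image_insert_eq, union_insert, hb i]
      exact (hext _ _ (hIio i ih) (hsmall i)).1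
  refine ⟨C₀ ∪ ⋃ i, b '' Iic i, subset_union_left,
    isCentered_union_iUnion hmono.directed_le hC₀ hIic,
    fun t => ⟨b (e t), Or.inr (mem_iUnion.2 ⟨e t, mem_image_of_mem b self_mem_Iic⟩), ?_⟩⟩
  have := (hext (invFun e (e t)) _ (hIio _ fun j _ => hIic j) (hsmall (e t))).2
  rwa [← hb, leftInverse_invFun e.injective t] at this

theorem exists_isCoherentPUltrafilter_superset [CompleteBooleanAlgebra B] (hB : #B ≤ 𝔠)
    (hnd : ∀ D : Set (ℕ → ℕ), #D < 𝔠 → ¬IsDominating D) {F : Set B} (hF : IsBFilter F)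
    {C : Set B} (hCF : C ⊆ F) (hC : #C < 𝔠) (hbase : ∀ a ∈ F, ∃ c ∈ C, c ≤ a) :
    ∃ U, IsCoherentPUltrafilter U ∧ F ⊆ U := by
  let R : {t : (ℕ → B) × (ℕ → ℕ) // IsBPartition (range t.1)} → B → Prop := fun t b =>
    (∃ n, b = ⨆ k ∈ t.1.2 ⁻¹' {n}, t.1.1 k) ∨
      ∃ A : Set ℕ, b = (⨆ k ∈ A, t.1.1 k) ∧ ∀ n, (A ∩ t.1.2 ⁻¹' {n}).Finite
  have hR : #{t : (ℕ → B) × (ℕ → ℕ) // IsBPartition (range t.1)} ≤ 𝔠 := by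
    refine (mk_subtype_le _).trans ?_
    rw [mk_prod, ← continuum_mul_self]
    exact mul_le_mul' (lift_le_continuum.2 (mk_nat_arrow_le_continuum hB)) (lift_le_continuum.2
      (mk_nat_arrow_le_continuum (mk_nat ▸ aleph0_le_continuum)))
  obtain ⟨S, hCS, hS, hSR⟩ := exists_isCentered_forall_of_extend aleph0_le_continuum hR R
    (hF.isCentered_of_subset hCF) hC fun t S hS hSc =>
      hS.exists_insert_fiber_or_finite_inter_fibers hnd t.2 t.1.2 hSc
  obtain ⟨U, hU, hSU⟩ := hS.exists_isBUltrafilter_superset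
  refine ⟨U, ⟨hU, fun p hp hP => ⟨isNUltrafilter_trace hU hp hP, fun A hdisj hcov hAU => ?_⟩⟩,
    fun a ha => ?_⟩
  · obtain ⟨h, rfl⟩ := exists_eq_preimage_singleton hdisj hcov
    obtain ⟨b, hbS, ⟨n, rfl⟩ | ⟨A, rfl, hA⟩⟩ := hSR ⟨(p, h), hP⟩
    · exact absurd (hSU hbS) (hAU n)
    · exact ⟨A, hSU hbS, hA⟩
  · obtain ⟨c, hc, hca⟩ := hbase a ha
    exact hU.1.2.2.1 c (hSU (hCS hc)) a hca

theorem coherentP_generic_existence_iff_dominating_general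
    [CompleteBooleanAlgebra B] [Infinite B]
    (hcard : #B ≤ Cardinal.continuum) :
    (∀ F : Set B, IsBFilter F →
        (∃ C ⊆ F, #C < Cardinal.continuum ∧ ∀ a ∈ F, ∃ c ∈ C, c ≤ a) →
        ∃ U : Set B, IsCoherentPUltrafilter U ∧ F ⊆ U) ↔
    ¬∃ D : Set (ℕ → ℕ), #D < Cardinal.continuum ∧
        ∀ g : ℕ → ℕ, ∃ f ∈ D, ∀ᶠ n in Filter.atTop, g n ≤ f n := by
  constructor
  · rintro hgen ⟨D, hDc, hD⟩
    obtain ⟨F, hF, hbase, hnot⟩ := exists_small_isBFilter_not_subset_coherentP (B := B) hDc hD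
    obtain ⟨U, hU, hFU⟩ := hgen F hF hbase
    exact hnot U hU hFU
  · rintro hnd F hF ⟨C, hCF, hC, hbase⟩
    exact exists_isCoherentPUltrafilter_superset hcard (fun D hDc hD => hnd ⟨D, hDc, hD⟩)
      hF hCF hC hbase

/-- Generic existence of coherent P-ultrafilters on a complete ccc algebra of
size at most 𝔠 is equivalent to the nonexistence of a dominating family of
size less than 𝔠 (i.e. to 𝔠 = 𝔡). -/
theorem coherentP_generic_existence_iff_dominating
    [CompleteBooleanAlgebra B] [Infinite B] (hcc : BCCC B)
    (hcard : #B ≤ Cardinal.continuum) :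
    (∀ F : Set B, IsBFilter F →
        (∃ C ⊆ F, #C < Cardinal.continuum ∧ ∀ a ∈ F, ∃ c ∈ C, c ≤ a) →
        ∃ U : Set B, IsCoherentPUltrafilter U ∧ F ⊆ U) ↔
    ¬∃ D : Set (ℕ → ℕ), #D < Cardinal.continuum ∧
        ∀ g : ℕ → ℕ, ∃ f ∈ D, ∀ᶠ n in Filter.atTop, g n ≤ f n :=
  coherentP_generic_existence_iff_dominating_general hcard
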